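/- arXiv:2504.17831 — 2 statements merged into one kernel-verified Lean document; each statement's English description precedes it below -/
import Mathlib

section
/- Let 𝒞 be a treeset on a set X. Then for all u, v ∈ V_𝒞, the path-metric distance in the graph (V_𝒞, T_𝒞) satisfies d_{T_𝒞}(u,v) = |u ∖ v|. -/
open Set

/-- A family of sets is *nested* if for any two members, one of the four
intersections of the sets or their complements is empty. -/
def Nested {X : Type*} (𝒞 : Set (Set X)) : Prop :=
  ∀ C ∈ 𝒞, ∀ D ∈ 𝒞, C ∩ D = ∅ ∨ C ∩ Dᶜ = ∅ ∨ Cᶜ ∩ D = ∅ ∨ Cᶜ ∩ Dᶜ = ∅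

/-- A *treeset* on `X`: a family of nonempty proper subsets of `X` that is nested,
closed under complementation and finitely separating. -/
def Treeset {X : Type*} (𝒞 : Set (Set X)) : Prop :=
  (∀ C ∈ 𝒞, C.Nonempty ∧ C ≠ Set.univ) ∧
  Nested 𝒞 ∧
  (∀ C ∈ 𝒞, Cᶜ ∈ 𝒞) ∧
  (∀ x y : X, {C | C ∈ 𝒞 ∧ x ∈ C ∧ y ∉ C}.Finite)

/-- The vertices `V_𝒞` of the structure tree: subsets `u ⊆ 𝒞` satisfying (U1)–(U3). -/
def IsVertex {X : Type*} (𝒞 : Set (Set X)) (u : Set (Set X)) : Prop :=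
  u ⊆ 𝒞 ∧
  (∀ C ∈ 𝒞, Xor' (C ∈ u) (Cᶜ ∈ u)) ∧
  (∀ C ∈ u, ∀ D ∈ 𝒞, C ⊆ D → D ∈ u) ∧
  ¬ ∃ f : ℕ → Set X, (∀ n, f n ∈ u) ∧ ∀ n, f (n + 1) ⊂ f n

/-- A *walk* of length `n` in the (directed presentation of the) edge set `E`. -/
def IsWalk {α : Type*} (E : Set (α × α)) (f : ℕ → α) (n : ℕ) : Prop :=
  ∀ i < n, (f i, f (i + 1)) ∈ E

/-- Two points are joined by an `E`-path. -/
def Reach {α : Type*} (E : Set (α × α)) (x y : α) : Prop :=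
  ∃ (n : ℕ) (f : ℕ → α), f 0 = x ∧ f n = y ∧ IsWalk E f n

/-- The extended path metric `d_E` of a graph, with values in `ℕ∞` (`∞` if no path exists). -/
noncomputable def graphDist {α : Type*} (E : Set (α × α)) (x y : α) : ℕ∞ :=
  sInf {d : ℕ∞ | ∃ (n : ℕ) (f : ℕ → α), d = (n : ℕ∞) ∧ f 0 = x ∧ f n = y ∧ IsWalk E f n}

/-- A graph is *acyclic* if it has no injective cycle (of length at least 3,
i.e. not doubling back along a single edge). -/
def Acyclic {α : Type*} (E : Set (α × α)) : Prop :=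
  ¬ ∃ (f : ℕ → α) (n : ℕ), 3 ≤ n ∧ IsWalk E f n ∧ f n = f 0 ∧
      ∀ i j, i < n → j < n → f i = f j → i = j

/-- The edge set `T_𝒞` of the structure tree on `V_𝒞`. -/
def TEdges {X : Type*} (𝒞 : Set (Set X)) : Set (Set (Set X) × Set (Set X)) :=
  {p | IsVertex 𝒞 p.1 ∧ IsVertex 𝒞 p.2 ∧ ∃ C, p.1 \ p.2 = {C}}

/-!
Along an edge `(p, q)` of the structure tree we have `p \ q = {C}`, hence
`p \ v ⊆ insert C (q \ v)`: the size of `· \ v` drops by at most one per step, which is the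
lower bound. Conversely, let `C` be a `⊆`-minimal element of a finite nonempty `u \ v`. As `v` is
upward closed, `C` is even minimal in `u`, and this is what makes `(u \ {C}) ∪ {Cᶜ}` a vertex
again. It is adjacent to `u` and its difference with `v` is `(u \ v) \ {C}`, so induction on
`|u \ v|` gives the upper bound.
-/

section GraphDist

variable {α : Type*} {E : Set (α × α)} {x y z : α}

lemma graphDist_self : graphDist E x x = 0 :=
  nonpos_iff_eq_zero.mp <|
    sInf_le ⟨0, fun _ => x, Nat.cast_zero.symm, rfl, rfl, fun _ h => absurd h (Nat.not_lt_zero _)⟩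

lemma graphDist_le_graphDist_add_one (h : (x, y) ∈ E) :
    graphDist E x z ≤ graphDist E y z + 1 := by
  unfold graphDist
  rcases Set.eq_empty_or_nonempty
      {d : ℕ∞ | ∃ (n : ℕ) (f : ℕ → α), d = n ∧ f 0 = y ∧ f n = z ∧ IsWalk E f n} with hS | hS
  · rw [hS, sInf_empty, top_add]
    exact le_top
  obtain ⟨n, f, hd, rfl, rfl, hf⟩ := csInf_mem hS
  rw [hd]
  let g : ℕ → α := fun | 0 => x | i + 1 => f i
  refine sInf_le ⟨n + 1, g, by push_cast; rfl, rfl, rfl, ?_⟩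
  rintro (_ | i) hi
  · exact h
  · exact hf i (by omega)

lemma IsWalk.apply_zero_le_add {φ : α → ℕ∞} (hφ : ∀ p ∈ E, φ p.1 ≤ φ p.2 + 1) {f : ℕ → α} :
    ∀ {n : ℕ}, IsWalk E f n → φ (f 0) ≤ n + φ (f n)
  | 0, _ => by simp
  | n + 1, hf => calc
      φ (f 0) ≤ n + φ (f n) := IsWalk.apply_zero_le_add hφ fun i hi => hf i (by omega)
      _ ≤ n + (φ (f (n + 1)) + 1) := by gcongr; exact hφ _ (hf n (by omega))
      _ = ↑(n + 1) + φ (f (n + 1)) := by push_cast; ring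

lemma le_graphDist_of_le_add_one {φ : α → ℕ∞} (hφ : ∀ p ∈ E, φ p.1 ≤ φ p.2 + 1)
    (hy : φ y = 0) : φ x ≤ graphDist E x y := by
  refine le_sInf ?_
  rintro _ ⟨n, f, rfl, rfl, rfl, hf⟩
  simpa [hy] using hf.apply_zero_le_add hφ

end GraphDist

lemma Set.encard_diff_le_encard_diff_add_one {β : Type*} {p q v : Set β} {C : β}
    (h : p \ q = {C}) : (p \ v).encard ≤ (q \ v).encard + 1 := by
  have hsub : p \ v ⊆ insert C (q \ v) := by
    intro D ⟨hDp, hDv⟩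
    by_cases hDq : D ∈ q
    · exact Or.inr ⟨hDq, hDv⟩
    · exact Or.inl (by simpa [h] using (show D ∈ p \ q from ⟨hDp, hDq⟩))
  exact (encard_le_encard hsub).trans (encard_insert_le _ _)

lemma not_exists_descending_iff_wellFoundedOn {β : Type*} {r : β → β → Prop} [IsStrictOrder β r]
    (s : Set β) :
    (¬ ∃ f : ℕ → β, (∀ n, f n ∈ s) ∧ ∀ n, r (f (n + 1)) (f n)) ↔ s.WellFoundedOn r := by
  rw [Set.wellFoundedOn_iff_no_descending_seq]
  refine ⟨fun h f hf => h ⟨f, hf, fun n => f.map_rel_iff.mpr (Nat.lt_succ_self n)⟩, ?_⟩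
  rintro h ⟨f, hf, hr⟩
  exact h (RelEmbedding.natGT f hr) hf

section FlipAt

variable {X : Type*} {u v : Set (Set X)} {C D : Set X}

def flipAt (u : Set (Set X)) (C : Set X) : Set (Set X) := insert Cᶜ (u \ {C})

lemma mem_flipAt : D ∈ flipAt u C ↔ D = Cᶜ ∨ D ∈ u ∧ D ≠ C := Iff.rfl

lemma diff_flipAt (hC : C ∈ u) (hne : C ≠ Cᶜ) : u \ flipAt u C = {C} := by
  ext D
  simp only [mem_sdiff, mem_flipAt, mem_singleton_iff]
  constructor
  · tauto
  · rintro rfl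
    tauto

lemma flipAt_diff (hCv : Cᶜ ∈ v) : flipAt u C \ v = (u \ v) \ {C} := by
  ext D
  simp only [mem_sdiff, mem_flipAt, mem_singleton_iff]
  constructor
  · rintro ⟨rfl | ⟨hDu, hDC⟩, hDv⟩
    · exact absurd hCv hDv
    · exact ⟨⟨hDu, hDv⟩, hDC⟩
  · rintro ⟨⟨hDu, hDv⟩, hDC⟩
    exact ⟨Or.inr ⟨hDu, hDC⟩, hDv⟩

end FlipAt

namespace IsVertex

variable {X : Type*} {𝒞 : Set (Set X)} {u v : Set (Set X)} {C D : Set X}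

lemma compl_mem_iff (hu : IsVertex 𝒞 u) (hD : D ∈ 𝒞) : Dᶜ ∈ u ↔ D ∉ u := by
  have := xor_iff_iff_not.mp (hu.2.1 D hD)
  tauto

lemma eq_of_subset (hu : IsVertex 𝒞 u) (hv : IsVertex 𝒞 v) (h : u ⊆ v) : u = v := by
  refine h.antisymm fun D hDv => ?_
  by_contra hDu
  exact (hv.compl_mem_iff (hv.1 hDv)).mp (h ((hu.compl_mem_iff (hv.1 hDv)).mpr hDu)) hDv

lemma wellFoundedOn (hu : IsVertex 𝒞 u) : u.WellFoundedOn (· ⊂ ·) :=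
  (not_exists_descending_iff_wellFoundedOn u).mp hu.2.2.2

lemma minimal_of_minimal_diff (hu : IsVertex 𝒞 u) (hv : IsVertex 𝒞 v)
    (hC : Minimal (· ∈ u \ v) C) : Minimal (· ∈ u) C :=
  ⟨hC.1.1, fun D hDu hDC =>
    hC.2 ⟨hDu, fun hDv => hC.1.2 (hv.2.2.1 D hDv C (hu.1 hC.1.1) hDC)⟩ hDC⟩

lemma flipAt (hu : IsVertex 𝒞 u) (hC : Minimal (· ∈ u) C) (hCc : Cᶜ ∈ 𝒞) (hCu : C ≠ univ) :
    IsVertex 𝒞 (flipAt u C) := by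
  have hC𝒞 : C ∈ 𝒞 := hu.1 hC.1
  have hCcC : ¬ Cᶜ ⊆ C := fun h => hCu (compl_le_self.mp h)
  have hne : C ≠ Cᶜ := fun h => hCcC h.ge
  have hCcu : Cᶜ ∉ u := fun h => (hu.compl_mem_iff hC𝒞).mp h hC.1
  refine ⟨?_, fun D hD => xor_iff_iff_not.mpr ?_, ?_, ?_⟩
  · rintro D (rfl | ⟨hD, -⟩)
    exacts [hCc, hu.1 hD]
  · have := hu.compl_mem_iff hD
    by_cases hDC : D = C
    · subst hDC
      simp [mem_flipAt, hne, hC.1]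
    by_cases hDCc : D = Cᶜ
    · subst hDCc
      simp [mem_flipAt, hne, hC.1]
    have hDcC : Dᶜ ≠ C := fun h => hDCc (by rw [← h, compl_compl])
    simp [mem_flipAt, hDC, hDCc, hDcC, this]
  · rintro D hD E hE hDE
    rw [mem_flipAt] at hD ⊢
    rcases hD with rfl | ⟨hDu, hDC⟩
    · by_cases hEC : E = Cᶜ
      · exact Or.inl hEC
      refine Or.inr ⟨by_contra fun hEu => hEC ?_, ?_⟩
      · have hEcu : Eᶜ ∈ u := (hu.compl_mem_iff hE).mpr hEu
        rw [← hC.eq_of_le hEcu (compl_subset_comm.mp hDE), compl_compl]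
      · rintro rfl
        exact hCcC hDE
    · refine Or.inr ⟨hu.2.2.1 D hDu E hE hDE, ?_⟩
      rintro rfl
      exact hDC (hC.eq_of_le hDu hDE)
  · exact (not_exists_descending_iff_wellFoundedOn _).mpr
      (Set.wellFoundedOn_insert.mpr (hu.wellFoundedOn.subset sdiff_subset))

end IsVertex

section StructureTree

variable {X : Type*} {𝒞 : Set (Set X)} {u v : Set (Set X)}

lemma exists_tEdges_encard_diff_add_one (h𝒞 : ∀ C ∈ 𝒞, C ≠ univ) (hu : IsVertex 𝒞 u)
    (hv : IsVertex 𝒞 v) (hfin : (u \ v).Finite) (hne : (u \ v).Nonempty) :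
    ∃ w, (u, w) ∈ TEdges 𝒞 ∧ (w \ v).encard + 1 = (u \ v).encard := by
  obtain ⟨C, hC⟩ := hfin.exists_minimal hne
  have hC𝒞 : C ∈ 𝒞 := hu.1 hC.1.1
  have hCcv : Cᶜ ∈ v := (hv.compl_mem_iff hC𝒞).mpr hC.1.2
  have hne : C ≠ Cᶜ := fun h => h𝒞 C hC𝒞 (compl_le_self.mp h.ge)
  have hw := hu.flipAt (hu.minimal_of_minimal_diff hv hC) (hv.1 hCcv) (h𝒞 C hC𝒞)
  refine ⟨flipAt u C, ⟨hu, hw, C, diff_flipAt hC.1.1 hne⟩, ?_⟩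
  rw [flipAt_diff hCcv, encard_sdiff_singleton_add_one hC.1]

lemma graphDist_tEdges_le_of_encard_diff_eq (h𝒞 : ∀ C ∈ 𝒞, C ≠ univ) (hv : IsVertex 𝒞 v) (n : ℕ) :
    ∀ u, IsVertex 𝒞 u → (u \ v).encard = n → graphDist (TEdges 𝒞) u v ≤ n := by
  induction n with
  | zero =>
    intro u hu h
    rw [hu.eq_of_subset hv (sdiff_eq_empty.mp (encard_eq_zero.mp h)), graphDist_self]
    exact zero_le
  | succ n ih =>
    intro u hu h
    have hfin : (u \ v).Finite := finite_of_encard_eq_coe h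
    have hne : (u \ v).Nonempty := nonempty_of_encard_ne_zero (by simp [h])
    obtain ⟨w, huw, hw⟩ := exists_tEdges_encard_diff_add_one h𝒞 hu hv hfin hne
    have hwn : (w \ v).encard = n := by
      rw [h, Nat.cast_succ] at hw
      exact WithTop.add_right_cancel ENat.one_ne_top hw
    calc graphDist (TEdges 𝒞) u v
      _ ≤ graphDist (TEdges 𝒞) w v + 1 := graphDist_le_graphDist_add_one huw
      _ ≤ n + 1 := by gcongr; exact ih w huw.2.1 hwn
      _ = ↑(n + 1) := by push_cast; rfl

end StructureTree

/-- For vertices `u, v ∈ V_𝒞`, the path metric of the structure tree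
satisfies `d_{T_𝒞}(u,v) = |u \ v|`. -/
theorem structureTree_dist_eq_encard_diff {X : Type*} (𝒞 : Set (Set X))
    (h𝒞 : Treeset 𝒞) (u v : Set (Set X)) (hu : IsVertex 𝒞 u) (hv : IsVertex 𝒞 v) :
    graphDist (TEdges 𝒞) u v = (u \ v).encard := by
  refine le_antisymm ?_ (le_graphDist_of_le_add_one (φ := fun p => (p \ v).encard) ?_ (by simp))
  · induction h : (u \ v).encard using ENat.recTopCoe with
    | top => exact le_top
    | coe n => exact graphDist_tEdges_le_of_encard_diff_eq (fun C hC => (h𝒞.1 C hC).2) hv n u hu h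
  · rintro ⟨p, q⟩ ⟨-, -, C, hC⟩
    exact encard_diff_le_encard_diff_add_one hC
end

section
/- Let (X,G) be a graph with uniformly bounded degrees and 𝒞 a cutset of G with uniformly bounded boundaries that is nested and closed under complementation. Then 𝒞 is finitely separating on each E_G-class: for every (x,y) ∈ E_G, the set {C ∈ 𝒞 : x ∈ C, y ∉ C} is finite. Consequently, for every E_G-class ω, the family 𝒞_ω = {C ∈ 𝒞 : C ⊆ ω} is a treeset on ω. -/
open Set

/-- `E` is (the directed presentation of) a graph: symmetric and irreflexive. -/
def IsGraph {α : Type*} (E : Set (α × α)) : Prop :=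
  (∀ p ∈ E, (p.2, p.1) ∈ E) ∧ ∀ x : α, (x, x) ∉ E

/-- `(α, E)` has uniformly bounded degrees. -/
def BddDeg {α : Type*} (E : Set (α × α)) : Prop :=
  ∃ d : ℕ, ∀ x : α, {y | (x, y) ∈ E}.encard ≤ (d : ℕ∞)

/-- The `E_G`-class (connected component) of `x`. -/
def cls {α : Type*} (E : Set (α × α)) (x : α) : Set α := {y | Reach E x y}

/-- The complement `C̄ = ω ∖ C` of `C` inside the `E_G`-class(es) of its points. -/
def cCompl {α : Type*} (E : Set (α × α)) (C : Set α) : Set α :=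
  {y | y ∉ C ∧ ∃ x ∈ C, Reach E x y}

/-- Inner vertex boundary `∂iv C` of a subset `C` of an `E_G`-class. -/
def innerB {α : Type*} (E : Set (α × α)) (C : Set α) : Set α :=
  {x | x ∈ C ∧ ∃ y, y ∉ C ∧ (x, y) ∈ E}

/-- Outer vertex boundary `∂ov C = ∂iv C̄` of a subset `C` of an `E_G`-class. -/
def outerB {α : Type*} (E : Set (α × α)) (C : Set α) : Set α :=
  {y | y ∉ C ∧ ∃ x ∈ C, (y, x) ∈ E}

/-- Outer edge boundary `∂oe C = (C × C̄) ∩ E` of a subset `C` of an `E_G`-class. -/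
def outerEdgeB {α : Type*} (E : Set (α × α)) (C : Set α) : Set (α × α) :=
  {p | p ∈ E ∧ p.1 ∈ C ∧ p.2 ∉ C}

/-- A *cut* of a graph: a nonempty proper subset of an `E_G`-class with finite
edge boundary. -/
def IsCut {α : Type*} (E : Set (α × α)) (C : Set α) : Prop :=
  (∃ x₀, x₀ ∈ C ∧ C ⊆ cls E x₀ ∧ C ≠ cls E x₀) ∧ (outerEdgeB E C).Finite

/-- `diam_E(A)`, with values in `ℕ∞`. -/
noncomputable def gdiam {α : Type*} (E : Set (α × α)) (A : Set α) : ℕ∞ :=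
  ⨆ x ∈ A, ⨆ y ∈ A, graphDist E x y

/-- `C` and `D` lie on the same `E_G`-class. -/
def SameClass {α : Type*} (E : Set (α × α)) (C D : Set α) : Prop :=
  ∃ x ∈ C, ∃ y ∈ D, Reach E x y

/-- `C` and `D` are *nested* with each other (complements taken within the class). -/
def NestedPair {α : Type*} (E : Set (α × α)) (C D : Set α) : Prop :=
  C ∩ D = ∅ ∨ C ∩ cCompl E D = ∅ ∨ cCompl E C ∩ D = ∅ ∨ cCompl E C ∩ cCompl E D = ∅
/-- A *treeset on a set* `ω`: a family of nonempty proper subsets of `ω` that is nested,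
closed under complementation within `ω`, and finitely separating. -/
def IsTreesetOn {α : Type*} (ω : Set α) (𝒟 : Set (Set α)) : Prop :=
  (∀ C ∈ 𝒟, C ⊆ ω ∧ C.Nonempty ∧ C ≠ ω) ∧
  (∀ C ∈ 𝒟, ∀ D ∈ 𝒟,
      C ∩ D = ∅ ∨ C ∩ (ω \ D) = ∅ ∨ (ω \ C) ∩ D = ∅ ∨ (ω \ C) ∩ (ω \ D) = ∅) ∧
  (∀ C ∈ 𝒟, ω \ C ∈ 𝒟) ∧
  (∀ x ∈ ω, ∀ y ∈ ω, {C | C ∈ 𝒟 ∧ x ∈ C ∧ y ∉ C}.Finite)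

/-!
A cut containing a point `x` is determined by its edge boundary: membership can only change
across an edge of `∂oe C` or of its reverse, so it is propagated along paths from `x`.
If `C` separates the ends of an edge `(a, b)` then `a ∈ ∂iv C`, so every edge of `∂oe C`
starts in the `r`-ball around `a`; by bounded degree there are finitely many such edges, hence
finitely many such `C`. A cut separating `x` from `y` separates the ends of some edge of a path
from `x` to `y`.
-/

section Graph

variable {α : Type*} {E : Set (α × α)}

lemma IsWalk.mono {f : ℕ → α} {m n : ℕ} (h : IsWalk E f n) (hmn : m ≤ n) : IsWalk E f m :=
  fun i hi => h i (hi.trans_le hmn)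

lemma IsWalk.reflTransGen {f : ℕ → α} {n : ℕ} (h : IsWalk E f n) :
    Relation.ReflTransGen (fun a b => (a, b) ∈ E) (f 0) (f n) := by
  induction n with
  | zero => exact .refl
  | succ n ih => exact (ih (h.mono n.le_succ)).tail (h n n.lt_succ_self)

lemma reach_iff_reflTransGen {x y : α} :
    Reach E x y ↔ Relation.ReflTransGen (fun a b => (a, b) ∈ E) x y := by
  refine ⟨fun ⟨n, f, h0, hn, hf⟩ => h0 ▸ hn ▸ hf.reflTransGen, fun h => ?_⟩
  induction h with
  | refl => exact ⟨0, fun _ => x, rfl, rfl, fun i hi => absurd hi i.not_lt_zero⟩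
  | @tail b c _ hbc ih =>
    obtain ⟨n, f, h0, hn, hf⟩ := ih
    refine ⟨n + 1, fun i => if i ≤ n then f i else c, by simpa using h0, by simp, fun i hi => ?_⟩
    rcases Nat.lt_succ_iff_lt_or_eq.mp hi with hi | rfl
    · simpa [hi.le, Nat.succ_le_of_lt hi] using hf i hi
    · simpa [hn] using hbc

lemma Reach.trans {x y z : α} (hxy : Reach E x y) (hyz : Reach E y z) : Reach E x z :=
  reach_iff_reflTransGen.2 ((reach_iff_reflTransGen.1 hxy).trans (reach_iff_reflTransGen.1 hyz))

lemma Reach.symm (hsym : ∀ p ∈ E, (p.2, p.1) ∈ E) {x y : α} (h : Reach E x y) : Reach E y x :=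
  reach_iff_reflTransGen.2 <| Relation.ReflTransGen.mono (fun a b hab => hsym (b, a) hab)
    y x (Relation.reflTransGen_swap.2 (reach_iff_reflTransGen.1 h))

lemma cls_eq_of_mem (hsym : ∀ p ∈ E, (p.2, p.1) ∈ E) {x y : α} (hy : y ∈ cls E x) :
    cls E y = cls E x :=
  Set.ext fun _ => ⟨(Reach.trans hy ·), ((Reach.symm hsym hy).trans ·)⟩

lemma cCompl_eq_cls_diff (hsym : ∀ p ∈ E, (p.2, p.1) ∈ E) {C : Set α} {x : α}
    (hCx : C ⊆ cls E x) (hC : C.Nonempty) : cCompl E C = cls E x \ C := by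
  obtain ⟨c, hc⟩ := hC
  ext z
  exact ⟨fun ⟨hzC, _, hd, hdz⟩ => ⟨(hCx hd).trans hdz, hzC⟩,
    fun ⟨hz, hzC⟩ => ⟨hzC, c, hc, ((hCx hc).symm hsym).trans hz⟩⟩

lemma IsCut.nonempty {C : Set α} (hC : IsCut E C) : C.Nonempty :=
  hC.1.imp fun _ h => h.1

lemma IsCut.subset_cls (hsym : ∀ p ∈ E, (p.2, p.1) ∈ E) {C : Set α} (hC : IsCut E C) {x : α}
    (hx : x ∈ C) : C ⊆ cls E x := by
  obtain ⟨⟨x₀, -, hsub, -⟩, -⟩ := hC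
  rwa [← cls_eq_of_mem hsym (hsub hx)] at hsub

lemma IsCut.ne_cls (hsym : ∀ p ∈ E, (p.2, p.1) ∈ E) {C : Set α} (hC : IsCut E C) {x : α}
    (hCx : C ⊆ cls E x) : C ≠ cls E x := by
  obtain ⟨⟨x₀, hx₀, -, hne⟩, -⟩ := hC
  rwa [cls_eq_of_mem hsym (hCx hx₀)] at hne

lemma mem_iff_of_mem_edge (hsym : ∀ p ∈ E, (p.2, p.1) ∈ E) (C : Set α) {a b : α}
    (hab : (a, b) ∈ E) :
    b ∈ C ↔ a ∈ C ∧ (a, b) ∉ outerEdgeB E C ∨ (b, a) ∈ outerEdgeB E C := by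
  have hba : (b, a) ∈ E := hsym (a, b) hab
  by_cases ha : a ∈ C <;> by_cases hb : b ∈ C <;> simp [outerEdgeB, ha, hb, hab, hba]

lemma mem_iff_mem_of_outerEdgeB_eq (hsym : ∀ p ∈ E, (p.2, p.1) ∈ E) {C D : Set α}
    (h : outerEdgeB E C = outerEdgeB E D) {x y : α} (hx : x ∈ C ↔ x ∈ D) (hxy : Reach E x y) :
    y ∈ C ↔ y ∈ D := by
  rw [reach_iff_reflTransGen] at hxy
  induction hxy with
  | refl => exact hx
  | tail _ hbc ih => rw [mem_iff_of_mem_edge hsym C hbc, mem_iff_of_mem_edge hsym D hbc, h, ih]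

lemma injOn_outerEdgeB (hsym : ∀ p ∈ E, (p.2, p.1) ∈ E) (x : α) :
    Set.InjOn (outerEdgeB E) {C | C ⊆ cls E x ∧ x ∈ C} := by
  rintro C ⟨hCx, hxC⟩ D ⟨hDx, hxD⟩ h
  have hx : x ∈ C ↔ x ∈ D := iff_of_true hxC hxD
  exact Set.ext fun y => ⟨fun hy => (mem_iff_mem_of_outerEdgeB_eq hsym h hx (hCx hy)).1 hy,
    fun hy => (mem_iff_mem_of_outerEdgeB_eq hsym h hx (hDx hy)).2 hy⟩

lemma graphDist_le_iff {x y : α} {n : ℕ} :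
    graphDist E x y ≤ n ↔ ∃ m ≤ n, ∃ f : ℕ → α, f 0 = x ∧ f m = y ∧ IsWalk E f m := by
  refine ⟨fun h => ?_, fun ⟨m, hmn, f, h0, hm, hf⟩ =>
    (sInf_le ⟨m, f, rfl, h0, hm, hf⟩ : graphDist E x y ≤ m).trans (Nat.cast_le.2 hmn)⟩
  have hne : {d : ℕ∞ | ∃ (m : ℕ) (f : ℕ → α), d = m ∧ f 0 = x ∧ f m = y ∧
      IsWalk E f m}.Nonempty := by
    refine Set.nonempty_iff_ne_empty.2 fun he => ?_
    rw [graphDist, he, sInf_empty, top_le_iff] at h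
    exact ENat.natCast_ne_top n h
  obtain ⟨m, f, hd, h0, hm, hf⟩ := csInf_mem hne
  exact ⟨m, by rwa [← Nat.cast_le (α := ℕ∞), ← hd], f, h0, hm, hf⟩

lemma graphDist_le_gdiam {A : Set α} {a b : α} (ha : a ∈ A) (hb : b ∈ A) :
    graphDist E a b ≤ gdiam E A :=
  (le_iSup₂ (f := fun y (_ : y ∈ A) => graphDist E a y) b hb).trans
    (le_iSup₂ (f := fun x (_ : x ∈ A) => ⨆ y ∈ A, graphDist E x y) a ha)

lemma BddDeg.finite_neighbors (hdeg : BddDeg E) (x : α) : {y | (x, y) ∈ E}.Finite := by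
  obtain ⟨d, hd⟩ := hdeg
  exact Set.encard_lt_top_iff.1 ((hd x).trans_lt (ENat.natCast_lt_top d))

lemma BddDeg.finite_edges_from (hdeg : BddDeg E) {S : Set α} (hS : S.Finite) :
    {p | p ∈ E ∧ p.1 ∈ S}.Finite :=
  (hS.prod (hS.biUnion fun a _ => hdeg.finite_neighbors a)).subset
    fun _ ⟨hp, hp1⟩ => ⟨hp1, Set.mem_biUnion hp1 hp⟩

lemma BddDeg.finite_setOf_graphDist_le (hdeg : BddDeg E) (x : α) (r : ℕ) :
    {y | graphDist E x y ≤ r}.Finite := by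
  induction r with
  | zero =>
    refine (Set.finite_singleton x).subset fun y hy => ?_
    obtain ⟨m, hm, f, rfl, rfl, -⟩ := graphDist_le_iff.1 hy
    rw [Nat.le_zero.1 hm]
    rfl
  | succ r ih =>
    refine (ih.union (ih.biUnion fun z _ => hdeg.finite_neighbors z)).subset fun y hy => ?_
    obtain ⟨m, hm, f, rfl, rfl, hf⟩ := graphDist_le_iff.1 hy
    rcases hm.lt_or_eq with hm | rfl
    · exact .inl (graphDist_le_iff.2 ⟨m, by omega, f, rfl, rfl, hf⟩)
    · exact .inr (Set.mem_biUnion (graphDist_le_iff.2 ⟨r, le_rfl, f, rfl, rfl, hf.mono r.le_succ⟩)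
        (hf r r.lt_succ_self))

variable {𝒞 : Set (Set α)} {r : ℕ}

lemma finite_cuts_separating_edge (hsym : ∀ p ∈ E, (p.2, p.1) ∈ E) (hdeg : BddDeg E)
    (hcut : ∀ C ∈ 𝒞, IsCut E C) (hbdd : ∀ C ∈ 𝒞, gdiam E (innerB E C) ≤ r) {a b : α}
    (hab : (a, b) ∈ E) : {C | C ∈ 𝒞 ∧ a ∈ C ∧ b ∉ C}.Finite := by
  have hF := hdeg.finite_edges_from (hdeg.finite_setOf_graphDist_le a r)
  refine Set.Finite.of_finite_image (f := outerEdgeB E) (hF.finite_subsets.subset ?_) ?_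
  · rintro _ ⟨C, ⟨hC, ha, hb⟩, rfl⟩ p hp
    have haC : a ∈ innerB E C := ⟨ha, b, hb, hab⟩
    have hpC : p.1 ∈ innerB E C := ⟨hp.2.1, p.2, hp.2.2, hp.1⟩
    exact ⟨hp.1, (graphDist_le_gdiam haC hpC).trans (hbdd C hC)⟩
  · refine (injOn_outerEdgeB hsym a).mono fun C ⟨hC, ha, _⟩ => ?_
    exact ⟨(hcut C hC).subset_cls hsym ha, ha⟩

lemma finite_cuts_separating_of_reach (hsym : ∀ p ∈ E, (p.2, p.1) ∈ E) (hdeg : BddDeg E)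
    (hcut : ∀ C ∈ 𝒞, IsCut E C) (hbdd : ∀ C ∈ 𝒞, gdiam E (innerB E C) ≤ r) {x y : α}
    (hxy : Reach E x y) : {C | C ∈ 𝒞 ∧ x ∈ C ∧ y ∉ C}.Finite := by
  rw [reach_iff_reflTransGen] at hxy
  induction hxy with
  | refl => exact Set.finite_empty.subset fun C ⟨_, hx, hx'⟩ => hx' hx
  | @tail b c _ hbc ih =>
    refine (ih.union (finite_cuts_separating_edge hsym hdeg hcut hbdd hbc)).subset ?_
    rintro C ⟨hC, hx, hc⟩
    by_cases hb : b ∈ C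
    exacts [.inr ⟨hC, hb, hc⟩, .inl ⟨hC, hx, hb⟩]

end Graph

/-- A nested cutset with uniformly bounded boundaries, closed under
complementation, of a bounded-degree graph is finitely separating on each `E_G`-class;
consequently its restriction to each class is a treeset on that class. -/
theorem nested_cutset_is_treeset {X : Type*} (G : Set (X × X))
    (hG : IsGraph G) (hdeg : BddDeg G)
    (𝒞 : Set (Set X)) (hcut : ∀ C ∈ 𝒞, IsCut G C)
    (r : ℕ) (hbdd : ∀ C ∈ 𝒞, gdiam G (innerB G C) ≤ (r : ℕ∞))
    (hnested : ∀ C ∈ 𝒞, ∀ D ∈ 𝒞, SameClass G C D → NestedPair G C D)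
    (hcompl : ∀ C ∈ 𝒞, cCompl G C ∈ 𝒞) :
    (∀ x y : X, Reach G x y → {C | C ∈ 𝒞 ∧ x ∈ C ∧ y ∉ C}.Finite) ∧
    (∀ x : X, IsTreesetOn (cls G x) {C | C ∈ 𝒞 ∧ C ⊆ cls G x}) := by
  have hsep := fun x y => finite_cuts_separating_of_reach (x := x) (y := y) hG.1 hdeg hcut hbdd
  refine ⟨hsep, fun x => ⟨?_, ?_, ?_, ?_⟩⟩
  · rintro C ⟨hC, hCx⟩
    exact ⟨hCx, (hcut C hC).nonempty, (hcut C hC).ne_cls hG.1 hCx⟩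
  · rintro C ⟨hC, hCx⟩ D ⟨hD, hDx⟩
    obtain ⟨c, hc⟩ := (hcut C hC).nonempty
    obtain ⟨d, hd⟩ := (hcut D hD).nonempty
    have h := hnested C hC D hD ⟨c, hc, d, hd, ((hCx hc).symm hG.1).trans (hDx hd)⟩
    rwa [NestedPair, cCompl_eq_cls_diff hG.1 hCx ⟨c, hc⟩,
      cCompl_eq_cls_diff hG.1 hDx ⟨d, hd⟩] at h
  · rintro C ⟨hC, hCx⟩
    rw [← cCompl_eq_cls_diff hG.1 hCx (hcut C hC).nonempty]
    exact ⟨hcompl C hC, fun z hz => hz.2.elim fun c ⟨hc, hcz⟩ => (hCx hc).trans hcz⟩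
  · intro y hy z hz
    exact (hsep y z ((hy.symm hG.1).trans hz)).subset fun C ⟨⟨hC, _⟩, hyC, hzC⟩ => ⟨hC, hyC, hzC⟩
end
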